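/- Let A be a synaptic algebra with projection lattice P and let e,f ∈ P be nonzero projections with e ∼ f, i.e., f = s_n s_{n−1} ⋯ s_1 e s_1 ⋯ s_{n−1} s_n for some finite sequence of symmetries s_1,…,s_n ∈ A. Then e and f have nonzero subprojections that are exchanged by a single symmetry: there exist projections 0 ≠ e₁ ≤ e, 0 ≠ f₁ ≤ f and a symmetry s ∈ A with s e₁ s = f₁. -/
import Mathlib


/-- For subsets `A, B` of a ring `R`, the commutant of `B` within `A`:
`C(B) = {x ∈ A : x b = b x for all b ∈ B}`. -/
def SynComm {R : Type*} [Ring R] (A : Set R) (B : Set R) : Set R :=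
  {x | x ∈ A ∧ ∀ b ∈ B, x * b = b * x}

/-- A synaptic algebra: a real vector subspace `A` of a real linear associative
algebra `R` with unity, satisfying axioms SA1–SA8 of Foulis.  The partial order
is recorded as a relation `le` on `R`, whose axioms are imposed on elements of
`A`; `1` is an order unit, the order is archimedean, and the norm convergence
occurring in SA8 is expressed via the order-unit characterization
`‖a‖ ≤ ε ↔ -ε•1 ≤ a ≤ ε•1`. -/
structure SynapticAlgebra (R : Type*) [Ring R] [Algebra ℝ R] where
  A : Set R
  zero_mem : (0 : R) ∈ A
  one_mem : (1 : R) ∈ A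
  add_mem : ∀ {a b : R}, a ∈ A → b ∈ A → a + b ∈ A
  smul_mem : ∀ (r : ℝ) {a : R}, a ∈ A → r • a ∈ A
  /-- the partial order on `A` (SA1) -/
  le : R → R → Prop
  le_refl : ∀ a ∈ A, le a a
  le_trans : ∀ a ∈ A, ∀ b ∈ A, ∀ c ∈ A, le a b → le b c → le a c
  le_antisymm : ∀ a ∈ A, ∀ b ∈ A, le a b → le b a → a = b
  add_le_add : ∀ a ∈ A, ∀ b ∈ A, ∀ c ∈ A, le a b → le (a + c) (b + c)
  smul_nonneg : ∀ (r : ℝ), 0 ≤ r → ∀ a ∈ A, le 0 a → le 0 (r • a)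
  /-- SA1: the ordered vector space `A` is archimedean -/
  archimedean : ∀ a ∈ A, ∀ b ∈ A, (∀ n : ℕ, le (n • a) b) → le a 0
  /-- SA1: `1` is an order unit for `A` -/
  orderUnit : ∀ a ∈ A, ∃ r : ℝ, le a (r • (1 : R))
  /-- SA2 (together with closure of `A` under squaring) -/
  sq_mem : ∀ a ∈ A, a * a ∈ A
  sq_nonneg : ∀ a ∈ A, le 0 (a * a)
  /-- SA3 -/
  SA3 : ∀ a ∈ A, ∀ b ∈ A, le 0 a → le 0 b → le 0 (a * b * a)
  /-- SA4 -/
  SA4 : ∀ a ∈ A, ∀ b ∈ A, le 0 b → a * b * a = 0 → a * b = 0 ∧ b * a = 0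
  /-- SA5: positive elements have square roots in `CC(a)` -/
  SA5 : ∀ a ∈ A, le 0 a →
    ∃ b ∈ SynComm A (SynComm A {a}), le 0 b ∧ b * b = a
  /-- SA6: existence of carrier projections -/
  SA6 : ∀ a ∈ A, ∃ p ∈ A, p * p = p ∧ ∀ b ∈ A, (a * b = 0 ↔ p * b = 0)
  /-- SA7: elements above `1` are invertible -/
  SA7 : ∀ a ∈ A, le 1 a → ∃ b ∈ A, a * b = 1 ∧ b * a = 1
  /-- SA8: commutants are closed under norm limits of ascending commuting sequences -/
  SA8 : ∀ a ∈ A, ∀ b ∈ A, ∀ f : ℕ → R, (∀ n, f n ∈ A) →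
    (∀ n, f n * b = b * f n) → (∀ n m, f n * f m = f m * f n) →
    (∀ n, le (f n) (f (n + 1))) →
    (∀ ε : ℝ, 0 < ε → ∃ N : ℕ, ∀ n ≥ N,
        le (a - f n) (ε • (1 : R)) ∧ le ((-ε) • (1 : R)) (a - f n)) →
    a * b = b * a
  /-- non-degeneracy: `0 ≠ 1` -/
  nondegenerate : (0 : R) ≠ 1

namespace SynapticAlgebra

variable {R : Type*} [Ring R] [Algebra ℝ R] (S : SynapticAlgebra R)

/-- The set `P` of projections of the synaptic algebra. -/
def Proj : Set R := {p | p ∈ S.A ∧ p * p = p}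

/-- A symmetry: an element `s ∈ A` with `s² = 1`. -/
def IsSymmetry (s : R) : Prop := s ∈ S.A ∧ s * s = 1

/-- Projections `e` and `f` are exchanged by a symmetry. -/
def ExchBySym (e f : R) : Prop := ∃ s, S.IsSymmetry s ∧ s * e * s = f

/-- `p ∼ q`: equivalence of projections induced by finite sequences of
symmetries, i.e. `q = sₙ ⋯ s₁ p s₁ ⋯ sₙ`. -/
def Equiv (p q : R) : Prop := Relation.ReflTransGen S.ExchBySym p q

/-- `p` and `q` are related: they have nonzero equivalent subprojections. -/
def Related (p q : R) : Prop :=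
  ∃ p₁ ∈ S.Proj, ∃ q₁ ∈ S.Proj, p₁ ≠ 0 ∧ q₁ ≠ 0 ∧
    S.le p₁ p ∧ S.le q₁ q ∧ S.Equiv p₁ q₁

/-- `p ≼ q`: `p` is equivalent to a subprojection of `q`. -/
def SubEquiv (p q : R) : Prop := ∃ q₁ ∈ S.Proj, S.le q₁ q ∧ S.Equiv p q₁

/-- `c` commutes with every element of `A` (so a projection `c` with this
property is a central projection, `c ∈ P ∩ C(A)`). -/
def IsCentral (c : R) : Prop := ∀ a ∈ S.A, c * a = a * c

/-- `m = e ∧ f`, the infimum of `e` and `f` in the projection lattice `P`. -/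
def IsMeet (e f m : R) : Prop :=
  m ∈ S.Proj ∧ S.le m e ∧ S.le m f ∧
    ∀ r ∈ S.Proj, S.le r e → S.le r f → S.le r m

/-- `j = e ∨ f`, the supremum of `e` and `f` in the projection lattice `P`. -/
def IsJoin (e f j : R) : Prop :=
  j ∈ S.Proj ∧ S.le e j ∧ S.le f j ∧
    ∀ r ∈ S.Proj, S.le e r → S.le f r → S.le j r

/-- `m = ⋁ Q`, the supremum of the set `Q` in the projection lattice `P`. -/
def IsSupOf (Q : Set R) (m : R) : Prop :=
  m ∈ S.Proj ∧ (∀ q ∈ Q, S.le q m) ∧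
    ∀ b ∈ S.Proj, (∀ q ∈ Q, S.le q b) → S.le m b

/-- `m = ⋀ Q`, the infimum of the set `Q` in the projection lattice `P`. -/
def IsInfOf (Q : Set R) (m : R) : Prop :=
  m ∈ S.Proj ∧ (∀ q ∈ Q, S.le m q) ∧
    ∀ b ∈ S.Proj, (∀ q ∈ Q, S.le b q) → S.le b m

/-- The projection lattice `P` is a complete lattice: every subset of `P`
has a supremum and an infimum in `P`. -/
def ProjComplete : Prop :=
  ∀ Q ⊆ S.Proj, (∃ m, S.IsSupOf Q m) ∧ (∃ m, S.IsInfOf Q m)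

/-- The projection lattice `P` is centrally orthocomplete: every family of
projections dominated by a pairwise orthogonal family of central projections
has a supremum in `P`. -/
def CentrallyOrthocomplete : Prop :=
  ∀ Q ⊆ S.Proj, ∀ c : R → R,
    (∀ q ∈ Q, c q ∈ S.Proj ∧ S.IsCentral (c q) ∧ S.le q (c q)) →
    (∀ q ∈ Q, ∀ q' ∈ Q, q ≠ q' → c q * c q' = 0) →
    ∃ m, S.IsSupOf Q m

/-- `c = γ p`: `c` is the central cover of `p`, the smallest central
projection dominating `p`. -/
def IsCentralCover (p c : R) : Prop :=
  c ∈ S.Proj ∧ S.IsCentral c ∧ S.le p c ∧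
    ∀ d ∈ S.Proj, S.IsCentral d → S.le p d → S.le c d

/-- `x = φ_e(f) = e ∧ (e^⊥ ∨ f)`, the Sasaki projection of `f` determined
by `e`, in the projection lattice `P` (where `e^⊥ = 1 - e`). -/
def IsSasaki (e f x : R) : Prop :=
  ∃ j, S.IsJoin (1 - e) f j ∧ S.IsMeet e j x

/-- Mackey compatibility of projections `p` and `q` in the OML `P`:
there are pairwise orthogonal projections `p₁, q₁, d` with `p = p₁ ∨ d = p₁ + d`
and `q = q₁ ∨ d = q₁ + d` (orthogonal projections satisfy `pq = qp = 0` and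
their join is their sum). -/
def Compatible (p q : R) : Prop :=
  ∃ p₁ ∈ S.Proj, ∃ q₁ ∈ S.Proj, ∃ d ∈ S.Proj,
    p₁ * q₁ = 0 ∧ q₁ * p₁ = 0 ∧ p₁ * d = 0 ∧ d * p₁ = 0 ∧
    q₁ * d = 0 ∧ d * q₁ = 0 ∧ p = p₁ + d ∧ q = q₁ + d

end SynapticAlgebra

section Dev
private lemma half_eq {R : Type*} [Ring R] [Algebra ℝ R] {x y : R} (h : y = x + x) :
    x = (1/2 : ℝ) • y := by
  rw [h, ← two_smul ℝ x, smul_smul]; norm_num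

namespace SynapticAlgebra

variable {R : Type*} [Ring R] [Algebra ℝ R] (S : SynapticAlgebra R)

/-! ### Basic membership lemmas -/

lemma neg_mem' {a : R} (ha : a ∈ S.A) : -a ∈ S.A := by
  have := S.smul_mem (-1 : ℝ) ha
  rwa [neg_one_smul] at this

lemma sub_mem' {a b : R} (ha : a ∈ S.A) (hb : b ∈ S.A) : a - b ∈ S.A := by
  have := S.add_mem ha (S.neg_mem' hb)
  rwa [← sub_eq_add_neg] at this

lemma jordan_mem {a b : R} (ha : a ∈ S.A) (hb : b ∈ S.A) : a * b + b * a ∈ S.A := by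
  have h : a * b + b * a = (a + b) * (a + b) - a * a - b * b := by noncomm_ring
  rw [h]
  exact S.sub_mem' (S.sub_mem' (S.sq_mem _ (S.add_mem ha hb)) (S.sq_mem _ ha)) (S.sq_mem _ hb)


lemma aba_mem {a b : R} (ha : a ∈ S.A) (hb : b ∈ S.A) : a * b * a ∈ S.A := by
  have h : ((a * b + b * a) * a + a * (a * b + b * a)) - ((a * a) * b + b * (a * a))
      = a * b * a + a * b * a := by noncomm_ring
  rw [half_eq h]
  exact S.smul_mem _ (S.sub_mem' (S.jordan_mem (S.jordan_mem ha hb) ha)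
    (S.jordan_mem (S.sq_mem _ ha) hb))

lemma triple_mem {a b c : R} (ha : a ∈ S.A) (hb : b ∈ S.A) (hc : c ∈ S.A) :
    a * b * c + c * b * a ∈ S.A := by
  have h : ((a * b + b * a) * c + c * (a * b + b * a))
      + (a * (b * c + c * b) + (b * c + c * b) * a)
      - (b * (a * c + c * a) + (a * c + c * a) * b)
      = (a * b * c + c * b * a) + (a * b * c + c * b * a) := by noncomm_ring
  rw [half_eq h]
  exact S.smul_mem _ (S.sub_mem' (S.add_mem (S.jordan_mem (S.jordan_mem ha hb) hc)
    (S.jordan_mem ha (S.jordan_mem hb hc))) (S.jordan_mem hb (S.jordan_mem ha hc)))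

lemma comm_mul_mem {a b : R} (ha : a ∈ S.A) (hb : b ∈ S.A) (h : a * b = b * a) :
    a * b ∈ S.A := by
  have h2 : a * b + b * a = (a * b) + (a * b) := by rw [h]
  rw [half_eq h2]
  exact S.smul_mem _ (S.jordan_mem ha hb)

/-! ### Order lemmas -/

lemma le_of_sub_nonneg {a b : R} (ha : a ∈ S.A) (hb : b ∈ S.A) (h : S.le 0 (b - a)) :
    S.le a b := by
  have := S.add_le_add 0 S.zero_mem (b - a) (S.sub_mem' hb ha) a ha h
  simpa using this

lemma sub_nonneg_of_le {a b : R} (ha : a ∈ S.A) (hb : b ∈ S.A) (h : S.le a b) :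
    S.le 0 (b - a) := by
  have := S.add_le_add a ha b hb (-a) (S.neg_mem' ha) h
  simpa [sub_eq_add_neg] using this

lemma add_nonneg' {a b : R} (ha : a ∈ S.A) (hb : b ∈ S.A) (h1 : S.le 0 a) (h2 : S.le 0 b) :
    S.le 0 (a + b) := by
  have h3 : S.le b (a + b) := by
    have := S.add_le_add 0 S.zero_mem a ha b hb h1
    simpa using this
  exact S.le_trans 0 S.zero_mem b hb (a + b) (S.add_mem ha hb) h2 h3

lemma smul_le_smul {a b : R} {r : ℝ} (hr : 0 ≤ r) (ha : a ∈ S.A) (hb : b ∈ S.A)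
    (h : S.le a b) : S.le (r • a) (r • b) := by
  have h1 := S.smul_nonneg r hr (b - a) (S.sub_mem' hb ha) (S.sub_nonneg_of_le ha hb h)
  rw [smul_sub] at h1
  exact S.le_of_sub_nonneg (S.smul_mem r ha) (S.smul_mem r hb) h1

lemma one_nonneg : S.le 0 (1 : R) := by
  have := S.sq_nonneg 1 S.one_mem; simpa using this

lemma sq_zero_eq_zero {x : R} (hx : x ∈ S.A) (h : x * x = 0) : x = 0 := by
  have h1 : x * 1 * x = 0 := by rw [mul_one]; exact h
  have := (S.SA4 x hx 1 S.one_mem S.one_nonneg h1).1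
  rwa [mul_one] at this

lemma proj_nonneg {p : R} (hp : p ∈ S.Proj) : S.le 0 p := by
  have := S.sq_nonneg p hp.1; rwa [hp.2] at this

lemma compl_proj {p : R} (hp : p ∈ S.Proj) : (1 - p) ∈ S.Proj := by
  refine ⟨S.sub_mem' S.one_mem hp.1, ?_⟩
  have := hp.2; noncomm_ring [this]

lemma proj_le_one {p : R} (hp : p ∈ S.Proj) : S.le p 1 := by
  apply S.le_of_sub_nonneg hp.1 S.one_mem
  have h := S.proj_nonneg (S.compl_proj hp)
  exact h

end SynapticAlgebra
end Dev
section Dev2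
namespace SynapticAlgebra

variable {R : Type*} [Ring R] [Algebra ℝ R] (S : SynapticAlgebra R)

/-- Square roots with bicommutant property. -/
lemma sqrt_exists {a : R} (ha : a ∈ S.A) (hpos : S.le 0 a) :
    ∃ t, t ∈ S.A ∧ S.le 0 t ∧ t * t = a ∧
      ∀ x ∈ S.A, x * a = a * x → x * t = t * x := by
  obtain ⟨b, hb, hbpos, hbsq⟩ := S.SA5 a ha hpos
  refine ⟨b, hb.1, hbpos, hbsq, ?_⟩
  intro x hx hxa
  exact (hb.2 x ⟨hx, by intro c hc; rw [Set.mem_singleton_iff] at hc; rw [hc]; exact hxa⟩).symm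

/-- Conjugation by a symmetry preserves positivity. -/
lemma sym_conj_nonneg {s a : R} (hs : s ∈ S.A) (hss : s * s = 1)
    (ha : a ∈ S.A) (hpos : S.le 0 a) : S.le 0 (s * a * s) := by
  obtain ⟨t, htA, htpos, htsq, -⟩ := S.sqrt_exists ha hpos
  have hmem : s * t * s ∈ S.A := S.aba_mem hs htA
  have h : (s * t * s) * (s * t * s) = s * a * s := by
    have : (s * t * s) * (s * t * s) = s * t * (s * s) * t * s := by noncomm_ring
    rw [this, hss, mul_one, ← htsq]; noncomm_ring
  have := S.sq_nonneg _ hmem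
  rwa [h] at this

/-- Product of commuting nonneg elements is nonneg. -/
lemma comm_mul_nonneg {a b : R} (ha : a ∈ S.A) (hb : b ∈ S.A)
    (hpa : S.le 0 a) (hpb : S.le 0 b) (hcomm : a * b = b * a) : S.le 0 (a * b) := by
  obtain ⟨t, htA, htpos, htsq, hcc⟩ := S.sqrt_exists ha hpa
  have htb : b * t = t * b := hcc b hb (by rw [hcomm])
  have h : a * b = t * b * t := by
    rw [← htsq]
    calc t * t * b = t * (t * b) := by rw [mul_assoc]
      _ = t * (b * t) := by rw [htb]
      _ = t * b * t := by rw [mul_assoc]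
  rw [h]
  exact S.SA3 t htA b hb htpos hpb

/-- Carrier projection of a nonneg element: two-sided unit and bicommutant member. -/
lemma carrier_exists {a : R} (ha : a ∈ S.A) (hpos : S.le 0 a) :
    ∃ p, p ∈ S.A ∧ p * p = p ∧ (∀ b ∈ S.A, (a * b = 0 ↔ p * b = 0)) ∧
      a * p = a ∧ p * a = a ∧ ∀ x ∈ S.A, x * a = a * x → x * p = p * x := by
  obtain ⟨p, hpA, hpp, hiff⟩ := S.SA6 a ha
  have h1p : (1 - p) ∈ S.A := S.sub_mem' S.one_mem hpA
  have hp1p : p * (1 - p) = 0 := by rw [mul_sub, mul_one, hpp, sub_self]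
  have ha1p : a * (1 - p) = 0 := (hiff (1 - p) h1p).mpr hp1p
  have hap : a * p = a := by
    have : a * (1 - p) = a - a * p := by rw [mul_sub, mul_one]
    rw [this] at ha1p
    linear_combination (norm := noncomm_ring) -ha1p
  have hconj : (1 - p) * a * (1 - p) = 0 := by rw [mul_assoc, ha1p, mul_zero]
  have hpa : p * a = a := by
    have h2 := (S.SA4 (1 - p) h1p a ha hpos hconj).1
    have h3 : (1 - p) * a = a - p * a := by rw [sub_mul, one_mul]
    rw [h3] at h2
    linear_combination (norm := noncomm_ring) -h2
  refine ⟨p, hpA, hpp, hiff, hap, hpa, ?_⟩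
  intro x hx hxa
  -- b := x(1-p) + (1-p)x
  have hbA : x * (1 - p) + (1 - p) * x ∈ S.A := S.jordan_mem hx h1p
  have hab : a * (x * (1 - p) + (1 - p) * x) = 0 := by
    have e1 : a * (x * (1 - p)) = x * (a * (1 - p)) := by
      rw [← mul_assoc, ← hxa, mul_assoc]
    have e2 : a * ((1 - p) * x) = (a * (1 - p)) * x := by rw [mul_assoc]
    rw [mul_add, e1, e2, ha1p, mul_zero, zero_mul, add_zero]
  have hpb := (hiff _ hbA).mp hab
  have hpx1p : p * (x * (1 - p)) = 0 := by
    have : p * (x * (1 - p) + (1 - p) * x) = p * (x * (1 - p)) + (p * (1 - p)) * x := by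
      rw [mul_add, mul_assoc]
    rw [this, hp1p, zero_mul, add_zero] at hpb
    exact hpb
  -- m := (1-p)xp + px(1-p) = (1-p)xp
  have hmA : (1 - p) * x * p + p * x * (1 - p) ∈ S.A := S.triple_mem h1p hx hpA
  have hm2 : p * x * (1 - p) = 0 := by rw [mul_assoc]; exact hpx1p
  have hmA' : (1 - p) * x * p ∈ S.A := by rwa [hm2, add_zero] at hmA
  have hmsq : ((1 - p) * x * p) * ((1 - p) * x * p) = 0 := by
    have hp0 : p * (1 - p) = 0 := hp1p
    calc ((1 - p) * x * p) * ((1 - p) * x * p)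
        = (1 - p) * x * (p * (1 - p)) * x * p := by noncomm_ring
      _ = 0 := by rw [hp0]; noncomm_ring
  have hm0 : (1 - p) * x * p = 0 := S.sq_zero_eq_zero hmA' hmsq
  -- conclude x p = p x
  have e1 : x * p - p * x * p = 0 := by
    have : (1 - p) * x * p = x * p - p * x * p := by noncomm_ring
    rwa [this] at hm0
  have e2 : p * x - p * x * p = 0 := by
    have : p * (x * (1 - p)) = p * x - p * x * p := by noncomm_ring
    rwa [this] at hpx1p
  have : x * p = p * x := by linear_combination (norm := noncomm_ring) e1 - e2
  exact this

end SynapticAlgebra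
end Dev2
section Dev3
namespace SynapticAlgebra

variable {R : Type*} [Ring R] [Algebra ℝ R] (S : SynapticAlgebra R)

/-- Polar/positive-part package for an arbitrary `c ∈ A`:
`t = |c| = √(c²)`, `r, r'` carriers of negative/positive parts, `c = t r' - t r`. -/
lemma posneg {c : R} (hc : c ∈ S.A) :
    ∃ t r r', t ∈ S.A ∧ r ∈ S.A ∧ r' ∈ S.A ∧
      t * t = c * c ∧ S.le 0 t ∧
      r * r = r ∧ r' * r' = r' ∧ r * r' = 0 ∧ r' * r = 0 ∧
      t * r = r * t ∧ t * r' = r' * t ∧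
      c = t * r' - t * r ∧ t = t * r + t * r' ∧
      S.le 0 (t * r) ∧ S.le 0 (t * r') ∧
      (∀ x ∈ S.A, x * c = c * x → x * t = t * x ∧ x * r = r * x ∧ x * r' = r' * x) ∧
      (∀ x ∈ S.A, x * (c * c) = (c * c) * x → x * t = t * x) := by
  have hc2A : c * c ∈ S.A := S.sq_mem c hc
  have hc2pos : S.le 0 (c * c) := S.sq_nonneg c hc
  obtain ⟨t, htA, htpos, htsq, htcc⟩ := S.sqrt_exists hc2A hc2pos
  have htc : c * t = t * c := htcc c hc (by rw [mul_assoc])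
  obtain ⟨u, hu⟩ : ∃ u : R, u = t - c := ⟨_, rfl⟩
  obtain ⟨v, hv⟩ : ∃ v : R, v = t + c := ⟨_, rfl⟩
  have huA : u ∈ S.A := by rw [hu]; exact S.sub_mem' htA hc
  have hvA : v ∈ S.A := by rw [hv]; exact S.add_mem htA hc
  have huv : u * v = 0 := by
    have h : u * v = t * t - c * c + (t * c - c * t) := by rw [hu, hv]; noncomm_ring
    rw [h, htsq, htc]; abel
  have hvu : v * u = 0 := by
    have h : v * u = t * t - c * c - (t * c - c * t) := by rw [hu, hv]; noncomm_ring
    rw [h, htsq, htc]; abel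
  have hu2A : u * u ∈ S.A := S.sq_mem u huA
  have hv2A : v * v ∈ S.A := S.sq_mem v hvA
  obtain ⟨r, hrA, hrr, hriff, hu2r, hru2, hrcc⟩ :=
    S.carrier_exists hu2A (S.sq_nonneg u huA)
  obtain ⟨r', hr'A, hr'r', hr'iff, hv2r', hr'v2, hr'cc⟩ :=
    S.carrier_exists hv2A (S.sq_nonneg v hvA)
  have hut : u * t = t * u := by rw [hu, sub_mul, mul_sub, htc]
  have hvt : v * t = t * v := by rw [hv, add_mul, mul_add, htc]
  have hur : u * r = r * u := hrcc u huA (by rw [mul_assoc])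
  have hvr' : v * r' = r' * v := hr'cc v hvA (by rw [mul_assoc])
  have htr : t * r = r * t := hrcc t htA (by
    calc t * (u * u) = (t * u) * u := by rw [mul_assoc]
      _ = (u * t) * u := by rw [hut]
      _ = u * (t * u) := by rw [mul_assoc]
      _ = u * (u * t) := by rw [hut]
      _ = u * u * t := by rw [mul_assoc])
  have htr' : t * r' = r' * t := hr'cc t htA (by
    calc t * (v * v) = (t * v) * v := by rw [mul_assoc]
      _ = (v * t) * v := by rw [hvt]
      _ = v * (t * v) := by rw [mul_assoc]
      _ = v * (v * t) := by rw [hvt]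
      _ = v * v * t := by rw [mul_assoc])
  have hu_eq : u = u * r := by
    have hcomm : u * (1 - r) = (1 - r) * u := by
      rw [mul_sub, sub_mul, mul_one, one_mul, hur]
    have hmem : u * (1 - r) ∈ S.A :=
      S.comm_mul_mem huA (S.sub_mem' S.one_mem hrA) hcomm
    have hsq : (u * (1 - r)) * (u * (1 - r)) = 0 := by
      calc (u * (1 - r)) * (u * (1 - r))
          = u * ((1 - r) * u) * (1 - r) := by noncomm_ring
        _ = u * (u * (1 - r)) * (1 - r) := by rw [← hcomm]
        _ = (u * u) * ((1 - r) * (1 - r)) := by noncomm_ring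
        _ = (u * u) * (1 - r) := by
              have h4 : (1 - r) * (1 - r) = 1 - r := by noncomm_ring [hrr]
              rw [h4]
        _ = 0 := by rw [mul_sub, mul_one, hu2r, sub_self]
    have h0 := S.sq_zero_eq_zero hmem hsq
    rw [mul_sub, mul_one] at h0
    exact (sub_eq_zero.mp h0)
  have hv_eq : v = v * r' := by
    have hcomm : v * (1 - r') = (1 - r') * v := by
      rw [mul_sub, sub_mul, mul_one, one_mul, hvr']
    have hmem : v * (1 - r') ∈ S.A :=
      S.comm_mul_mem hvA (S.sub_mem' S.one_mem hr'A) hcomm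
    have hsq : (v * (1 - r')) * (v * (1 - r')) = 0 := by
      calc (v * (1 - r')) * (v * (1 - r'))
          = v * ((1 - r') * v) * (1 - r') := by noncomm_ring
        _ = v * (v * (1 - r')) * (1 - r') := by rw [← hcomm]
        _ = (v * v) * ((1 - r') * (1 - r')) := by noncomm_ring
        _ = (v * v) * (1 - r') := by
              have h4 : (1 - r') * (1 - r') = 1 - r' := by noncomm_ring [hr'r']
              rw [h4]
        _ = 0 := by rw [mul_sub, mul_one, hv2r', sub_self]
    have h0 := S.sq_zero_eq_zero hmem hsq
    rw [mul_sub, mul_one] at h0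
    exact (sub_eq_zero.mp h0)
  have hu2v2 : (u * u) * (v * v) = 0 := by
    calc (u * u) * (v * v) = u * (u * v) * v := by noncomm_ring
      _ = 0 := by rw [huv]; noncomm_ring
  have hv2u2 : (v * v) * (u * u) = 0 := by
    calc (v * v) * (u * u) = v * (v * u) * u := by noncomm_ring
      _ = 0 := by rw [hvu]; noncomm_ring
  have hrv2 : r * (v * v) = 0 := (hriff (v * v) hv2A).mp hu2v2
  have hv2r0 : (v * v) * r = 0 := by
    have h := hrcc (v * v) hv2A (by rw [hv2u2, hu2v2])
    rw [h]; exact hrv2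
  have hr'r : r' * r = 0 := (hr'iff r hrA).mp hv2r0
  have hrr' : r * r' = 0 := by
    have hmem : r * r' + r' * r ∈ S.A := S.jordan_mem hrA hr'A
    have hmem2 : r * r' ∈ S.A := by rwa [hr'r, add_zero] at hmem
    have hsq : (r * r') * (r * r') = 0 := by
      calc (r * r') * (r * r') = r * (r' * r) * r' := by noncomm_ring
        _ = 0 := by rw [hr'r]; noncomm_ring
    exact S.sq_zero_eq_zero hmem2 hsq
  have hur' : u * r' = 0 := by
    calc u * r' = (u * r) * r' := by rw [← hu_eq]
      _ = u * (r * r') := by rw [mul_assoc]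
      _ = 0 := by rw [hrr', mul_zero]
  have hvr : v * r = 0 := by
    calc v * r = (v * r') * r := by rw [← hv_eq]
      _ = v * (r' * r) := by rw [mul_assoc]
      _ = 0 := by rw [hr'r, mul_zero]
  have hu2 : u = t * r + t * r := by
    have h1 : (u + v) * r = u * r + v * r := by rw [add_mul]
    rw [hvr, add_zero, ← hu_eq] at h1
    have h2 : u + v = t + t := by rw [hu, hv]; abel
    rw [h2, add_mul] at h1
    exact h1.symm
  have hv2 : v = t * r' + t * r' := by
    have h1 : (u + v) * r' = u * r' + v * r' := by rw [add_mul]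
    rw [hur', zero_add, ← hv_eq] at h1
    have h2 : u + v = t + t := by rw [hu, hv]; abel
    rw [h2, add_mul] at h1
    exact h1.symm
  have hquarter : ∀ x : R, (4:ℝ) • x = 0 → x = 0 := by
    intro x hx
    have := congrArg (fun y => (1/4 : ℝ) • y) hx
    simpa [smul_smul] using this
  have hu2r'0 : (u * u) * r' = 0 := by
    calc (u * u) * r' = u * (u * r') := by rw [mul_assoc]
      _ = 0 := by rw [hur', mul_zero]
  have hv2r00 : (v * v) * r = 0 := hv2r0
  have h1 : (u * u) * (1 - r - r') = 0 := by
    rw [mul_sub, mul_sub, mul_one, hu2r, hu2r'0]; simp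
  have h2 : (v * v) * (1 - r - r') = 0 := by
    rw [mul_sub, mul_sub, mul_one, hv2r00, hv2r']; simp
  have hg : (t * t) * (1 - r - r') = 0 := by
    apply hquarter
    have hsum : u * u + v * v = t * t + t * t + (c * c + c * c) := by
      rw [hu, hv]; noncomm_ring
    rw [← htsq] at hsum
    have hE : (t * t + t * t + (t * t + t * t)) * (1 - r - r') = 0 := by
      rw [← hsum, add_mul, h1, h2, add_zero]
    have h4 : (4:ℝ) • ((t * t) * (1 - r - r'))
        = (t * t + t * t + (t * t + t * t)) * (1 - r - r') := by
      simp only [add_mul]; module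
    rw [h4, hE]
  have hproj1 : (1 - r - r') * (1 - r - r') = 1 - r - r' := by
    have hexp : (1 - r - r') * (1 - r - r')
        = 1 - r - r' - r + r * r + r * r' - r' + r' * r + r' * r' := by noncomm_ring
    rw [hexp, hrr, hr'r', hrr', hr'r]; abel
  have hcommw : t * (1 - r - r') = (1 - r - r') * t := by
    rw [mul_sub, mul_sub, sub_mul, sub_mul, mul_one, one_mul, htr, htr']
  have ht_sum : t = t * r + t * r' := by
    have hwA : t * (1 - r - r') ∈ S.A :=
      S.comm_mul_mem htA (S.sub_mem' (S.sub_mem' S.one_mem hrA) hr'A) hcommw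
    have hwsq : (t * (1 - r - r')) * (t * (1 - r - r')) = 0 := by
      calc (t * (1 - r - r')) * (t * (1 - r - r'))
          = t * ((1 - r - r') * t) * (1 - r - r') := by noncomm_ring
        _ = t * (t * (1 - r - r')) * (1 - r - r') := by rw [← hcommw]
        _ = (t * t) * ((1 - r - r') * (1 - r - r')) := by noncomm_ring
        _ = (t * t) * (1 - r - r') := by rw [hproj1]
        _ = 0 := hg
    have hw0 := S.sq_zero_eq_zero hwA hwsq
    have h5 : t - (t * r + t * r') = 0 := by
      have h6 : t * (1 - r - r') = t - (t * r + t * r') := by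
        rw [mul_sub, mul_sub, mul_one, sub_sub]
      rwa [h6] at hw0
    exact (sub_eq_zero.mp h5)
  have hc_eq : c = t * r' - t * r := by
    calc c = t - u := by rw [hu]; abel
      _ = (t * r + t * r') - (t * r + t * r) := by rw [← ht_sum, ← hu2]
      _ = t * r' - t * r := by abel
  have hposr : S.le 0 (t * r) :=
    S.comm_mul_nonneg htA hrA htpos (S.proj_nonneg ⟨hrA, hrr⟩) htr
  have hposr' : S.le 0 (t * r') :=
    S.comm_mul_nonneg htA hr'A htpos (S.proj_nonneg ⟨hr'A, hr'r'⟩) htr'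
  refine ⟨t, r, r', htA, hrA, hr'A, htsq, htpos, hrr, hr'r', hrr', hr'r,
    htr, htr', hc_eq, ht_sum, hposr, hposr', ?_, htcc⟩
  intro x hx hxc
  have hxc2 : x * (c * c) = (c * c) * x := by
    calc x * (c * c) = (x * c) * c := by rw [mul_assoc]
      _ = (c * x) * c := by rw [hxc]
      _ = c * (x * c) := by rw [mul_assoc]
      _ = c * (c * x) := by rw [hxc]
      _ = (c * c) * x := by rw [mul_assoc]
  have hxt : x * t = t * x := htcc x hx hxc2
  have hxu : x * u = u * x := by
    rw [hu, mul_sub, sub_mul, hxt, hxc]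
  have hxv : x * v = v * x := by
    rw [hv, mul_add, add_mul, hxt, hxc]
  have hxu2 : x * (u * u) = (u * u) * x := by
    calc x * (u * u) = (x * u) * u := by rw [mul_assoc]
      _ = (u * x) * u := by rw [hxu]
      _ = u * (x * u) := by rw [mul_assoc]
      _ = u * (u * x) := by rw [hxu]
      _ = (u * u) * x := by rw [mul_assoc]
  have hxv2 : x * (v * v) = (v * v) * x := by
    calc x * (v * v) = (x * v) * v := by rw [mul_assoc]
      _ = (v * x) * v := by rw [hxv]
      _ = v * (x * v) := by rw [mul_assoc]
      _ = v * (v * x) := by rw [hxv]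
      _ = (v * v) * x := by rw [mul_assoc]
  exact ⟨hxt, hrcc x hx hxu2, hr'cc x hx hxv2⟩

end SynapticAlgebra
end Dev3
section Dev4
namespace SynapticAlgebra

variable {R : Type*} [Ring R] [Algebra ℝ R] (S : SynapticAlgebra R)

/-- Spectral cut: for `c ∈ A` there is a projection `e` commuting with
everything that commutes with `c`, with `c e ≥ 0` and `c e ≥ c`. -/
lemma spectral_cut {c : R} (hc : c ∈ S.A) :
    ∃ e, e ∈ S.A ∧ e * e = e ∧ e * c = c * e ∧ S.le 0 (c * e) ∧ S.le 0 (c * e - c) ∧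
      ∀ x ∈ S.A, x * c = c * x → x * e = e * x := by
  obtain ⟨t, r, r', htA, hrA, hr'A, htsq, htpos, hrr, hr'r', hrr', hr'r, htr, htr',
    hc_eq, ht_sum, hposr, hposr', htrans, -⟩ := S.posneg hc
  have hce : c * r' = t * r' := by
    rw [hc_eq, sub_mul, mul_assoc, mul_assoc, hr'r', hrr', mul_zero, sub_zero]
  have hec : r' * c = t * r' := by
    rw [hc_eq, mul_sub]
    have e1 : r' * (t * r') = t * r' := by
      calc r' * (t * r') = (r' * t) * r' := by rw [mul_assoc]
        _ = (t * r') * r' := by rw [htr']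
        _ = t * (r' * r') := by rw [mul_assoc]
        _ = t * r' := by rw [hr'r']
    have e2 : r' * (t * r) = 0 := by
      calc r' * (t * r) = (r' * t) * r := by rw [mul_assoc]
        _ = (t * r') * r := by rw [htr']
        _ = t * (r' * r) := by rw [mul_assoc]
        _ = 0 := by rw [hr'r, mul_zero]
    rw [e1, e2, sub_zero]
  have hsub : c * r' - c = t * r := by rw [hce, hc_eq]; abel
  refine ⟨r', hr'A, hr'r', by rw [hce, hec], by rw [hce]; exact hposr',
    by rw [hsub]; exact hposr, ?_⟩
  intro x hx hxc
  exact (htrans x hx hxc).2.2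

/-- If `0 ≤ a ≠ 0`, then `a` is not below `λ•1` for some small `λ ∈ (0,1]`. -/
lemma arch_pick {a : R} (ha : a ∈ S.A) (hpos : S.le 0 a) (hne : a ≠ 0) :
    ∃ lam : ℝ, 0 < lam ∧ lam ≤ 1 ∧ ¬ S.le a (lam • (1:R)) := by
  by_contra hcon
  push_neg at hcon
  have key : ∀ n : ℕ, S.le (n • a) (1:R) := by
    intro n
    have hpos1 : (0:ℝ) < 1/(n+1) := by positivity
    have hle1 : (1:ℝ)/(n+1) ≤ 1 := by
      rw [div_le_one (by positivity)]
      have : (0:ℝ) ≤ n := Nat.cast_nonneg n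
      linarith
    have h1 := hcon (1/(n+1)) hpos1 hle1
    have h2 := S.smul_le_smul (r := (n:ℝ)) (Nat.cast_nonneg n) ha
      (S.smul_mem _ S.one_mem) h1
    rw [smul_smul] at h2
    have h3 : S.le (((n:ℝ)*(1/(n+1))) • (1:R)) 1 := by
      apply S.le_of_sub_nonneg (S.smul_mem _ S.one_mem) S.one_mem
      have heq : (1:R) - ((n:ℝ)*(1/(n+1))) • (1:R) = (1 - (n:ℝ)*(1/(n+1))) • (1:R) := by
        rw [sub_smul, one_smul]
      rw [heq]
      apply S.smul_nonneg _ ?_ _ S.one_mem S.one_nonneg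
      have h5 : (n:ℝ)*(1/(n+1)) ≤ 1 := by
        rw [mul_one_div, div_le_one (by positivity)]
        linarith [(Nat.cast_nonneg n : (0:ℝ) ≤ n)]
      linarith
    have h4 := S.le_trans _ (S.smul_mem _ ha) _ (S.smul_mem _ S.one_mem) _ S.one_mem h2 h3
    rwa [Nat.cast_smul_eq_nsmul] at h4
  have h0 := S.archimedean a ha 1 S.one_mem key
  exact hne (S.le_antisymm a ha 0 S.zero_mem h0 hpos)

/-- Inverses of elements `≥ λ•1` with `λ > 0`. -/
lemma inv_exists {M : R} (hM : M ∈ S.A) {lam : ℝ} (hl : 0 < lam)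
    (h : S.le (lam • (1:R)) M) :
    ∃ N, N ∈ S.A ∧ M * N = 1 ∧ N * M = 1 ∧
      ∀ x : R, x * M = M * x → x * N = N * x := by
  have h1 : S.le (1:R) ((1/lam) • M) := by
    have h2 := S.smul_le_smul (r := 1/lam) (by positivity) (S.smul_mem _ S.one_mem) hM h
    rwa [smul_smul, one_div_mul_cancel (ne_of_gt hl), one_smul] at h2
  obtain ⟨b, hbA, hb1, hb2⟩ := S.SA7 _ (S.smul_mem (1/lam) hM) h1
  refine ⟨(1/lam) • b, S.smul_mem _ hbA, ?_, ?_, ?_⟩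
  · rw [mul_smul_comm]
    rw [smul_mul_assoc] at hb1
    exact hb1
  · rw [smul_mul_assoc]
    rw [mul_smul_comm] at hb2
    exact hb2
  · intro x hx
    have hMN : M * ((1/lam) • b) = 1 := by
      rw [mul_smul_comm]; rw [smul_mul_assoc] at hb1; exact hb1
    have hNM : ((1/lam) • b) * M = 1 := by
      rw [smul_mul_assoc]; rw [mul_smul_comm] at hb2; exact hb2
    set N := (1/lam) • b with hN
    calc x * N = (N * M) * (x * N) := by rw [hNM, one_mul]
      _ = N * ((M * x) * N) := by noncomm_ring
      _ = N * ((x * M) * N) := by rw [hx]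
      _ = (N * x) * (M * N) := by noncomm_ring
      _ = N * x := by rw [hMN, mul_one]

/-- Conjugation monotonicity by a nonnegative element. -/
lemma conj_mono {p x y : R} (hp : p ∈ S.A) (hppos : S.le 0 p)
    (hx : x ∈ S.A) (hy : y ∈ S.A) (h : S.le x y) :
    S.le (p * x * p) (p * y * p) := by
  have h1 := S.SA3 p hp (y - x) (S.sub_mem' hy hx) hppos (S.sub_nonneg_of_le hx hy h)
  have h2 : p * (y - x) * p = p * y * p - p * x * p := by noncomm_ring
  rw [h2] at h1
  exact S.le_of_sub_nonneg (S.aba_mem hp hx) (S.aba_mem hp hy) h1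

end SynapticAlgebra
end Dev4
section Dev5
namespace SynapticAlgebra

variable {R : Type*} [Ring R] [Algebra ℝ R] (S : SynapticAlgebra R)

/-- Key exchange lemma: if `p q p ≠ 0`, then `p` and `q` have nonzero
subprojections exchanged by a single symmetry. -/
lemma exchange_of_pqp_ne {p q : R} (hp : p ∈ S.Proj) (hq : q ∈ S.Proj)
    (hne : p * q * p ≠ 0) :
    ∃ p₁ ∈ S.Proj, ∃ q₁ ∈ S.Proj, p₁ ≠ 0 ∧ q₁ ≠ 0 ∧ S.le p₁ p ∧ S.le q₁ q ∧
      ∃ s, S.IsSymmetry s ∧ s * p₁ * s = q₁ := by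
  obtain ⟨hpA, hpp⟩ := hp
  obtain ⟨hqA, hqq⟩ := hq
  obtain ⟨d, hd_def⟩ : ∃ d : R, d = p + q - 1 := ⟨_, rfl⟩
  have hdA : d ∈ S.A := by
    rw [hd_def]; exact S.sub_mem' (S.add_mem hpA hqA) S.one_mem
  have hzA : d * d ∈ S.A := S.sq_mem d hdA
  have hzpos : S.le 0 (d * d) := S.sq_nonneg d hdA
  have hpp2 : ∀ x : R, p * (p * x) = p * x := fun x => by rw [← mul_assoc, hpp]
  have hqq2 : ∀ x : R, q * (q * x) = q * x := fun x => by rw [← mul_assoc, hqq]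
  -- key ring identities
  have hzp : (d * d) * p = p * q * p := by rw [hd_def]; noncomm_ring [hpp, hqq, hpp2, hqq2]
  have hpz : p * (d * d) = p * q * p := by rw [hd_def]; noncomm_ring [hpp, hqq, hpp2, hqq2]
  have hzq : (d * d) * q = q * p * q := by rw [hd_def]; noncomm_ring [hpp, hqq, hpp2, hqq2]
  have hqz : q * (d * d) = q * p * q := by rw [hd_def]; noncomm_ring [hpp, hqq, hpp2, hqq2]
  have hdpd : d * p * d = q * p * q := by rw [hd_def]; noncomm_ring [hpp, hqq, hpp2, hqq2]
  have hpz_comm : p * (d * d) = (d * d) * p := by rw [hpz, hzp]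
  have hqz_comm : q * (d * d) = (d * d) * q := by rw [hqz, hzq]
  have hdz_comm : d * (d * d) = (d * d) * d := by noncomm_ring
  have hpqpA : p * q * p ∈ S.A := S.aba_mem hpA hqA
  have hpqppos : S.le 0 (p * q * p) := S.SA3 p hpA q hqA (S.proj_nonneg ⟨hpA,hpp⟩) (S.proj_nonneg ⟨hqA,hqq⟩)
  -- pick the spectral level
  obtain ⟨lam, hl0, hl1, hnle⟩ := S.arch_pick hpqpA hpqppos hne
  obtain ⟨c, hc_def⟩ : ∃ c : R, c = d * d - lam • (1:R) := ⟨_, rfl⟩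
  have hcA : c ∈ S.A := by
    rw [hc_def]; exact S.sub_mem' hzA (S.smul_mem _ S.one_mem)
  have hc_comm : ∀ x : R, x * (d * d) = (d * d) * x → x * c = c * x := by
    intro x hx
    rw [hc_def, mul_sub, sub_mul, hx, mul_smul_comm, smul_mul_assoc, mul_one, one_mul]
  obtain ⟨e, heA, hee, hecz, hce_pos, hce_sub, hecc⟩ := S.spectral_cut hcA
  have he_comm : ∀ x ∈ S.A, x * (d * d) = (d * d) * x → x * e = e * x :=
    fun x hx h => hecc x hx (hc_comm x h)
  have hpe : p * e = e * p := he_comm p hpA hpz_comm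
  have hqe : q * e = e * q := he_comm q hqA hqz_comm
  have hde : d * e = e * d := he_comm d hdA hdz_comm
  have hze : (d * d) * e = e * (d * d) := he_comm (d * d) hzA rfl
  have heq1 : c * e = (d * d) * e - lam • e := by
    rw [hc_def, sub_mul, smul_mul_assoc, one_mul]
  -- p * e ≠ 0
  have hpe_ne : p * e ≠ 0 := by
    intro hpe0
    have hep0 : e * p = 0 := by rw [← hpe, hpe0]
    have hX : p * (c * e) * p = 0 := by
      rw [heq1]
      have h1 : p * ((d * d) * e - lam • e) * p
          = p * ((d * d) * e) * p - lam • (p * e * p) := by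
        rw [mul_sub, sub_mul, mul_smul_comm, smul_mul_assoc]
      rw [h1]
      have h2 : p * ((d * d) * e) * p = 0 := by
        calc p * ((d * d) * e) * p = p * ((d * d) * (e * p)) := by noncomm_ring
          _ = 0 := by rw [hep0, mul_zero, mul_zero]
      have h3 : p * e * p = 0 := by rw [hpe0, zero_mul]
      rw [h2, h3, smul_zero, sub_zero]
    have hpzp : p * (d * d) * p = p * q * p := by
      calc p * (d * d) * p = (p * q * p) * p := by rw [hpz]
        _ = p * q * (p * p) := by noncomm_ring
        _ = p * q * p := by rw [hpp]
    have hY : p * c * p = p * q * p - lam • p := by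
      rw [hc_def]
      have h1 : p * (d * d - lam • (1:R)) * p
          = p * (d * d) * p - lam • (p * 1 * p) := by
        rw [mul_sub, sub_mul, mul_smul_comm, smul_mul_assoc]
      rw [h1, hpzp, mul_one, hpp]
    have hposcc := S.SA3 p hpA (c * e - c)
      (S.sub_mem' (S.comm_mul_mem hcA heA (by rw [hecz])) hcA)
      (S.proj_nonneg ⟨hpA, hpp⟩) hce_sub
    have hkey : p * (c * e - c) * p = lam • p - p * q * p := by
      have hx : p * (c * e - c) * p = p * (c * e) * p - p * c * p := by noncomm_ring
      rw [hx, hX, hY]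
      module
    rw [hkey] at hposcc
    have h10 : S.le (p * q * p) (lam • p) :=
      S.le_of_sub_nonneg hpqpA (S.smul_mem _ hpA) hposcc
    have h11 : S.le (lam • p) (lam • (1:R)) :=
      S.smul_le_smul (le_of_lt hl0) hpA S.one_mem (S.proj_le_one ⟨hpA, hpp⟩)
    exact hnle (S.le_trans _ hpqpA _ (S.smul_mem _ hpA) _ (S.smul_mem _ S.one_mem) h10 h11)
  -- the invertible corner element M
  have hzeA : (d * d) * e ∈ S.A := S.comm_mul_mem hzA heA hze
  obtain ⟨M, hM_def⟩ : ∃ M : R, M = (d * d) * e + (1 - e) := ⟨_, rfl⟩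
  have hMA : M ∈ S.A := by
    rw [hM_def]; exact S.add_mem hzeA (S.sub_mem' S.one_mem heA)
  have hM_ge : S.le (lam • (1:R)) M := by
    apply S.le_of_sub_nonneg (S.smul_mem _ S.one_mem) hMA
    have hid : M - lam • (1:R) = ((d * d) * e - lam • e) + (1 - lam) • ((1:R) - e) := by
      rw [hM_def]; module
    rw [hid]
    apply S.add_nonneg'
    · exact S.sub_mem' hzeA (S.smul_mem _ heA)
    · exact S.smul_mem _ (S.sub_mem' S.one_mem heA)
    · rw [← heq1]; exact hce_pos
    · exact S.smul_nonneg _ (by linarith) _ (S.sub_mem' S.one_mem heA)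
        (S.proj_nonneg (S.compl_proj ⟨heA, hee⟩))
  obtain ⟨N, hNA, hMN, hNM, hNcc⟩ := S.inv_exists hMA hl0 hM_ge
  -- commutation with M and N
  have hM_comm : ∀ x : R, x * (d * d) = (d * d) * x → x * e = e * x → x * M = M * x := by
    intro x h1 h2
    rw [hM_def, mul_add, add_mul]
    congr 1
    · calc x * ((d * d) * e) = (x * (d * d)) * e := by noncomm_ring
        _ = ((d * d) * x) * e := by rw [h1]
        _ = (d * d) * (x * e) := by noncomm_ring
        _ = (d * d) * (e * x) := by rw [h2]
        _ = ((d * d) * e) * x := by noncomm_ring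
    · rw [mul_sub, sub_mul, mul_one, one_mul, h2]
  have hNq : q * N = N * q := hNcc q (hM_comm q hqz_comm hqe)
  have hNe : e * N = N * e := hNcc e (hM_comm e hze.symm rfl)
  have hNz : (d * d) * N = N * (d * d) := hNcc (d * d) (hM_comm (d * d) rfl hze)
  -- N ∙ (1-e) = 1-e  and the corner-inverse identity (d*d)*e*N = e
  have hee2 : ∀ x : R, e * (e * x) = e * x := fun x => by rw [← mul_assoc, hee]
  have hM1e : M * (1 - e) = 1 - e := by
    rw [hM_def]; noncomm_ring [hee, hee2]
  have hzeN : (d * d) * e * N = e := by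
    have h1 : (d * d) * e = M - (1 - e) := by rw [hM_def]; abel
    rw [h1, sub_mul, hMN]
    have h2 : (1 - e) * N = 1 - e := by
      have h3 : N * (1 - e) = 1 - e := by
        calc N * (1 - e) = N * (M * (1 - e)) := by rw [hM1e]
          _ = (N * M) * (1 - e) := by noncomm_ring
          _ = 1 - e := by rw [hNM, one_mul]
      calc (1 - e) * N = N - e * N := by rw [sub_mul, one_mul]
        _ = N - N * e := by rw [hNe]
        _ = N * (1 - e) := by rw [mul_sub, mul_one]
        _ = 1 - e := h3
    rw [h2]
    abel
  -- polar decomposition of d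
  obtain ⟨t, r, r', htA, hrA, hr'A, htsq, htpos, hrr, hr'r', hrr', hr'r, htr, htr',
    hd_eq, ht_sum, hposr, hposr', hdtrans, htcc2⟩ := S.posneg hdA
  have htz : t * (d * d) = (d * d) * t := by
    rw [← htsq]; rw [mul_assoc]
  have hte : t * e = e * t := he_comm t htA htz
  have htq : t * q = q * t := (htcc2 q hqA hqz_comm).symm
  have htN : t * N = N * t := hNcc t (hM_comm t htz hte)
  obtain ⟨s, hs_def⟩ : ∃ s : R, s = 1 - r - r := ⟨_, rfl⟩
  have hsA : s ∈ S.A := by rw [hs_def]; exact S.sub_mem' (S.sub_mem' S.one_mem hrA) hrA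
  have hss : s * s = 1 := by rw [hs_def]; noncomm_ring [hrr]
  have her : e * r = r * e := by
    have hed : e * d = d * e := hde.symm
    exact ((hdtrans e heA hed).2.1)
  have hes : e * s = s * e := by
    rw [hs_def, mul_sub, mul_sub, sub_mul, sub_mul, mul_one, one_mul, her]
  have hse : s * e = e * s := hes.symm
  have hts : t * s = d := by
    rw [hs_def]
    have h1 : t * (1 - r - r) = t - t * r - t * r := by
      rw [mul_sub, mul_sub, mul_one]
    rw [h1]
    have h2 : t - t * r - t * r = (t * r + t * r') - t * r - t * r := by
      rw [← ht_sum]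
    rw [h2, hd_eq]
    abel
  have hst : s * t = t * s := by
    rw [hs_def, sub_mul, sub_mul, one_mul, mul_sub, mul_sub, mul_one, htr]
  -- the central computation: t (s p s) t = (d d) q
  have E2 : t * (s * p * s) * t = (d * d) * q := by
    calc t * (s * p * s) * t = (t * s) * p * (s * t) := by noncomm_ring
      _ = (t * s) * p * (t * s) := by rw [hst]
      _ = d * p * d := by rw [hts]
      _ = q * p * q := hdpd
      _ = (d * d) * q := hzq.symm
  -- auxiliary corner-cancellation identities
  have hL : ∀ Y : R, (N * e * t) * (t * Y) = e * Y := by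
    intro Y
    calc (N * e * t) * (t * Y) = (N * e) * ((t * t) * Y) := by noncomm_ring
      _ = (N * e) * ((d * d) * Y) := by rw [htsq]
      _ = ((N * e) * (d * d)) * Y := by noncomm_ring
      _ = ((d * d) * e * N) * Y := by
          have : (N * e) * (d * d) = (d * d) * e * N := by
            calc (N * e) * (d * d) = N * (e * (d * d)) := by noncomm_ring
              _ = N * ((d * d) * e) := by rw [← hze]
              _ = (N * (d * d)) * e := by noncomm_ring
              _ = ((d * d) * N) * e := by rw [hNz]
              _ = (d * d) * (N * e) := by noncomm_ring
              _ = (d * d) * (e * N) := by rw [hNe]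
              _ = (d * d) * e * N := by noncomm_ring
          rw [this]
      _ = e * Y := by rw [hzeN]
  have hR : ∀ Y : R, (Y * t) * (t * (e * N)) = Y * e := by
    intro Y
    calc (Y * t) * (t * (e * N)) = Y * ((t * t) * (e * N)) := by noncomm_ring
      _ = Y * ((d * d) * (e * N)) := by rw [htsq]
      _ = Y * ((d * d) * e * N) := by noncomm_ring
      _ = Y * e := by rw [hzeN]
  have red : ∀ a : R, e * a = a → a * e = a →
      (N * e * t) * (t * a * t) * (t * (e * N)) = a := by
    intro a h1 h2
    calc (N * e * t) * (t * a * t) * (t * (e * N))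
        = ((N * e * t) * (t * (a * t))) * (t * (e * N)) := by noncomm_ring
      _ = (e * (a * t)) * (t * (e * N)) := by rw [hL (a * t)]
      _ = ((e * a) * t) * (t * (e * N)) := by noncomm_ring
      _ = (a * t) * (t * (e * N)) := by rw [h1]
      _ = a * e := hR a
      _ = a := h2
  -- the two conjugated elements
  have hX'eq : s * (p * e) * s = (s * p * s) * e := by
    calc s * (p * e) * s = s * p * (e * s) := by noncomm_ring
      _ = s * p * (s * e) := by rw [hes]
      _ = (s * p * s) * e := by noncomm_ring
  have hX'l : e * (s * (p * e) * s) = s * (p * e) * s := by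
    calc e * (s * (p * e) * s) = (e * s) * ((p * e) * s) := by noncomm_ring
      _ = (s * e) * ((p * e) * s) := by rw [hes]
      _ = s * ((e * (p * e)) * s) := by noncomm_ring
      _ = s * ((p * e) * s) := by
          have : e * (p * e) = p * e := by
            calc e * (p * e) = (e * p) * e := by noncomm_ring
              _ = (p * e) * e := by rw [← hpe]
              _ = p * (e * e) := by noncomm_ring
              _ = p * e := by rw [hee]
          rw [this]
      _ = s * (p * e) * s := by noncomm_ring
  have hX'r : (s * (p * e) * s) * e = s * (p * e) * s := by
    calc (s * (p * e) * s) * e = s * (p * e) * (s * e) := by noncomm_ring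
      _ = s * (p * e) * (e * s) := by rw [hse]
      _ = s * ((p * e) * e) * s := by noncomm_ring
      _ = s * (p * (e * e)) * s := by noncomm_ring
      _ = s * (p * e) * s := by rw [hee]
  have hYl : e * (q * e) = q * e := by
    calc e * (q * e) = (e * q) * e := by noncomm_ring
      _ = (q * e) * e := by rw [← hqe]
      _ = q * (e * e) := by noncomm_ring
      _ = q * e := by rw [hee]
  have hYr : (q * e) * e = q * e := by rw [mul_assoc, hee]
  -- main equation between conjugates
  have g1 : t * (s * (p * e) * s) * t = (d * d) * (q * e) := by
    calc t * (s * (p * e) * s) * t = t * ((s * p * s) * e) * t := by rw [hX'eq]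
      _ = (t * (s * p * s)) * (e * t) := by noncomm_ring
      _ = (t * (s * p * s)) * (t * e) := by rw [hte]
      _ = (t * (s * p * s) * t) * e := by noncomm_ring
      _ = ((d * d) * q) * e := by rw [E2]
      _ = (d * d) * (q * e) := by noncomm_ring
  have g2 : t * (q * e) * t = (d * d) * (q * e) := by
    calc t * (q * e) * t = (t * q) * (e * t) := by noncomm_ring
      _ = (q * t) * (t * e) := by rw [htq, hte]
      _ = q * ((t * t) * e) := by noncomm_ring
      _ = q * ((d * d) * e) := by rw [htsq]
      _ = q * (e * (d * d)) := by rw [hze]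
      _ = (q * e) * (d * d) := by noncomm_ring
      _ = (d * d) * (q * e) := by
          calc (q * e) * (d * d) = q * (e * (d * d)) := by noncomm_ring
            _ = q * ((d * d) * e) := by rw [← hze]
            _ = (q * (d * d)) * e := by noncomm_ring
            _ = ((d * d) * q) * e := by rw [hqz_comm]
            _ = (d * d) * (q * e) := by noncomm_ring
  have hfinal : s * (p * e) * s = q * e := by
    have h1 := red (s * (p * e) * s) hX'l hX'r
    have h2 := red (q * e) hYl hYr
    rw [← h1, ← h2, g1, g2]
  -- assemble the conclusion
  have hpeA : p * e ∈ S.A := S.comm_mul_mem hpA heA hpe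
  have hqeA : q * e ∈ S.A := S.comm_mul_mem hqA heA hqe
  have hpe_proj : (p * e) * (p * e) = p * e := by
    calc (p * e) * (p * e) = p * ((e * p) * e) := by noncomm_ring
      _ = p * ((p * e) * e) := by rw [← hpe]
      _ = p * (p * (e * e)) := by noncomm_ring
      _ = (p * p) * (e * e) := by noncomm_ring
      _ = p * e := by rw [hpp, hee]
  have hqe_proj : (q * e) * (q * e) = q * e := by
    calc (q * e) * (q * e) = q * ((e * q) * e) := by noncomm_ring
      _ = q * ((q * e) * e) := by rw [← hqe]
      _ = q * (q * (e * e)) := by noncomm_ring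
      _ = (q * q) * (e * e) := by noncomm_ring
      _ = q * e := by rw [hqq, hee]
  have hqe_ne : q * e ≠ 0 := by
    intro hq0
    apply hpe_ne
    have h1 : s * (s * (p * e) * s) * s = s * (q * e) * s := by rw [hfinal]
    have h2 : s * (s * (p * e) * s) * s = p * e := by
      calc s * (s * (p * e) * s) * s = (s * s) * (p * e) * (s * s) := by noncomm_ring
        _ = p * e := by rw [hss, one_mul, mul_one]
    rw [h2, hq0, mul_zero, zero_mul] at h1
    exact h1
  have hle_pe : S.le (p * e) p := by
    apply S.le_of_sub_nonneg hpeA hpA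
    have hid : p - p * e = p * (1 - e) * p := by noncomm_ring [hpp, hpe]
    rw [hid]
    exact S.SA3 p hpA (1 - e) (S.sub_mem' S.one_mem heA) (S.proj_nonneg ⟨hpA, hpp⟩)
      (S.proj_nonneg (S.compl_proj ⟨heA, hee⟩))
  have hle_qe : S.le (q * e) q := by
    apply S.le_of_sub_nonneg hqeA hqA
    have hid : q - q * e = q * (1 - e) * q := by noncomm_ring [hqq, hqe]
    rw [hid]
    exact S.SA3 q hqA (1 - e) (S.sub_mem' S.one_mem heA) (S.proj_nonneg ⟨hqA, hqq⟩)
      (S.proj_nonneg (S.compl_proj ⟨heA, hee⟩))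
  exact ⟨p * e, ⟨hpeA, hpe_proj⟩, q * e, ⟨hqeA, hqe_proj⟩, hpe_ne, hqe_ne,
    hle_pe, hle_qe, s, ⟨hsA, hss⟩, hfinal⟩

end SynapticAlgebra
end Dev5
section Dev6
namespace SynapticAlgebra

variable {R : Type*} [Ring R] [Algebra ℝ R] (S : SynapticAlgebra R)

/-- Orthogonal exchange: if `q = u p v` with `v u = u v = 1` and `p ⟂ q`,
then `s = u p + p v + 1 - p - q` is a symmetry exchanging `p` and `q`
(provided `u p + p v ∈ A`). -/
lemma orth_exchange {p q u v : R} (hpA : p ∈ S.A) (hqA : q ∈ S.A)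
    (hxyA : u * p + p * v ∈ S.A) (hpp : p * p = p) (hq_eq : u * p * v = q)
    (huv : u * v = 1) (hvu : v * u = 1) (hpq : p * q = 0) (hqp : q * p = 0) :
    ∃ s, S.IsSymmetry s ∧ s * p * s = q := by
  have huv2 : ∀ z : R, u * (v * z) = z := fun z => by rw [← mul_assoc, huv, one_mul]
  have hvu2 : ∀ z : R, v * (u * z) = z := fun z => by rw [← mul_assoc, hvu, one_mul]
  have hpp2 : ∀ z : R, p * (p * z) = p * z := fun z => by rw [← mul_assoc, hpp]
  have hpup : p * (u * p) = 0 := by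
    have h1 : p * (u * (p * v)) = 0 := by
      have : p * (u * (p * v)) = p * (u * p * v) := by noncomm_ring
      rw [this, hq_eq]; exact hpq
    calc p * (u * p) = p * (u * p) * 1 := by rw [mul_one]
      _ = p * (u * p) * (v * u) := by rw [hvu]
      _ = (p * (u * (p * v))) * u := by noncomm_ring
      _ = 0 := by rw [h1, zero_mul]
  have hpvp : p * (v * p) = 0 := by
    have h1 : (u * (p * v)) * p = 0 := by
      have : (u * (p * v)) * p = (u * p * v) * p := by noncomm_ring
      rw [this, hq_eq]; exact hqp
    calc p * (v * p) = 1 * (p * (v * p)) := by rw [one_mul]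
      _ = (v * u) * (p * (v * p)) := by rw [hvu]
      _ = v * ((u * (p * v)) * p) := by noncomm_ring
      _ = 0 := by rw [h1, mul_zero]
  have hpup2 : ∀ z : R, p * (u * (p * z)) = 0 := fun z => by
    calc p * (u * (p * z)) = (p * (u * p)) * z := by noncomm_ring
      _ = 0 := by rw [hpup, zero_mul]
  have hpvp2 : ∀ z : R, p * (v * (p * z)) = 0 := fun z => by
    calc p * (v * (p * z)) = (p * (v * p)) * z := by noncomm_ring
      _ = 0 := by rw [hpvp, zero_mul]
  obtain ⟨s, hs_def⟩ : ∃ s : R, s = u * p + p * v + 1 - p - q := ⟨_, rfl⟩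
  have hsA : s ∈ S.A := by
    rw [hs_def]
    exact S.sub_mem' (S.sub_mem' (S.add_mem hxyA S.one_mem) hpA) hqA
  have hss : s * s = 1 := by
    rw [hs_def, ← hq_eq]
    noncomm_ring [huv, huv2, hvu, hvu2, hpp, hpp2, hpup, hpup2, hpvp, hpvp2]
  have hsps : s * p * s = q := by
    rw [hs_def, ← hq_eq]
    noncomm_ring [huv, huv2, hvu, hvu2, hpp, hpp2, hpup, hpup2, hpvp, hpvp2]
  exact ⟨s, ⟨hsA, hss⟩, hsps⟩

end SynapticAlgebra
end Dev6

/-- Theorem 7.4: if `0 ≠ e ∼ f ≠ 0` (equivalence induced by a finite sequence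
of symmetries), then `e` and `f` have nonzero subprojections exchanged by a
single symmetry. -/
theorem stmt13 {R : Type*} [Ring R] [Algebra ℝ R] (S : SynapticAlgebra R)
    (e f : R) (he : e ∈ S.Proj) (hf : f ∈ S.Proj)
    (hne : e ≠ 0) (hnf : f ≠ 0) (heq : S.Equiv e f) :
    ∃ e₁ ∈ S.Proj, ∃ f₁ ∈ S.Proj, e₁ ≠ 0 ∧ f₁ ≠ 0 ∧
      S.le e₁ e ∧ S.le f₁ f ∧ ∃ s, S.IsSymmetry s ∧ s * e₁ * s = f₁ := by
  have heq' : Relation.ReflTransGen S.ExchBySym e f := heq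
  clear heq
  revert hf hnf
  induction heq' with
  | refl =>
    intro hf hnf
    exact ⟨e, he, e, he, hne, hne, S.le_refl e he.1, S.le_refl e he.1, 1,
      ⟨S.one_mem, one_mul 1⟩, by rw [mul_one, one_mul]⟩
  | @tail b c hab hbc ih =>
    intro hcP hnc
    obtain ⟨t, ⟨htA, htt⟩, htbc⟩ := hbc
    have htt2 : ∀ x : R, t * (t * x) = x := fun x => by rw [← mul_assoc, htt, one_mul]
    have hcc2 : ∀ x : R, c * (c * x) = c * x := fun x => by rw [← mul_assoc, hcP.2]
    have hb_eq : b = t * c * t := by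
      rw [← htbc]
      noncomm_ring [htt, htt2]
    have hbmem : b ∈ S.A := by rw [hb_eq]; exact S.aba_mem htA hcP.1
    have hbidem : b * b = b := by
      rw [hb_eq]
      noncomm_ring [htt, htt2, hcP.2, hcc2]
    have hbne : b ≠ 0 := by
      intro h0
      rw [h0, mul_zero, zero_mul] at htbc
      exact hnc htbc.symm
    obtain ⟨e₁, he₁P, b₁, hb₁P, hne₁, hnb₁, hle₁, hleb, w, ⟨hwA, hww⟩, hweb⟩ :=
      ih ⟨hbmem, hbidem⟩ hbne
    have hb₁2 : ∀ x : R, b₁ * (b₁ * x) = b₁ * x := fun x => by rw [← mul_assoc, hb₁P.2]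
    -- f₁ := t b₁ t ≤ c
    have hf₁A : t * b₁ * t ∈ S.A := S.aba_mem htA hb₁P.1
    have hf₁idem : (t * b₁ * t) * (t * b₁ * t) = t * b₁ * t := by
      noncomm_ring [htt, htt2, hb₁P.2, hb₁2]
    have hf₁P : t * b₁ * t ∈ S.Proj := ⟨hf₁A, hf₁idem⟩
    have hf₁ne : t * b₁ * t ≠ 0 := by
      intro h0
      apply hnb₁
      have h1 : t * (t * b₁ * t) * t = b₁ := by noncomm_ring [htt, htt2]
      rw [h0, mul_zero, zero_mul] at h1
      exact h1.symm
    have hf₁le : S.le (t * b₁ * t) c := by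
      apply S.le_of_sub_nonneg hf₁A hcP.1
      have hid : c - t * b₁ * t = t * (b - b₁) * t := by
        rw [← htbc]; noncomm_ring
      rw [hid]
      exact S.sym_conj_nonneg htA htt (S.sub_mem' hbmem hb₁P.1)
        (S.sub_nonneg_of_le hb₁P.1 hbmem hleb)
    by_cases hcase : e₁ * (t * b₁ * t) * e₁ = 0
    · -- orthogonal case: single symmetry via u = t*w, v = w*t
      have hf₁pos : S.le 0 (t * b₁ * t) := S.proj_nonneg hf₁P
      obtain ⟨h1, h2⟩ := S.SA4 e₁ he₁P.1 (t * b₁ * t) hf₁A hf₁pos hcase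
      have hww2 : ∀ x : R, w * (w * x) = x := fun x => by rw [← mul_assoc, hww, one_mul]
      have hq_eq : (t * w) * e₁ * (w * t) = t * b₁ * t := by
        have h3 : (t * w) * e₁ * (w * t) = t * (w * e₁ * w) * t := by noncomm_ring
        rw [h3, hweb]
      have huv : (t * w) * (w * t) = 1 := by noncomm_ring [htt, htt2, hww, hww2]
      have hvu : (w * t) * (t * w) = 1 := by noncomm_ring [htt, htt2, hww, hww2]
      have hxyA : (t * w) * e₁ + e₁ * (w * t) ∈ S.A := by
        have h4 : (t * w) * e₁ + e₁ * (w * t) = (t * w * e₁ + e₁ * w * t) := by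
          noncomm_ring
        rw [h4]
        exact S.triple_mem htA hwA he₁P.1
      obtain ⟨s, hsym, hsps⟩ := S.orth_exchange he₁P.1 hf₁A hxyA he₁P.2 hq_eq
        huv hvu h1 h2
      exact ⟨e₁, he₁P, t * b₁ * t, hf₁P, hne₁, hf₁ne, hle₁, hf₁le, s, hsym, hsps⟩
    · -- overlapping case: apply the exchange lemma
      obtain ⟨p₁, hp₁P, q₁, hq₁P, hnp₁, hnq₁, hlep₁, hleq₁, s, hsym, hsps⟩ :=
        S.exchange_of_pqp_ne he₁P hf₁P hcase
      refine ⟨p₁, hp₁P, q₁, hq₁P, hnp₁, hnq₁, ?_, ?_, s, hsym, hsps⟩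
      · exact S.le_trans p₁ hp₁P.1 e₁ he₁P.1 e he.1 hlep₁ hle₁
      · exact S.le_trans q₁ hq₁P.1 (t * b₁ * t) hf₁A c hcP.1 hleq₁ hf₁le
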